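/- (Evolution of the Bernoulli-vector helicity.) Let L > 0 and let u, p be smooth fields on ℝ × ℝ³, L-periodic in each spatial coordinate, solving the incompressible Euler equations: div u = 0 and ∂ₜu + (u·∇)u = −∇p. Set ω = curl u and E = ω × u + ∇(p + ½|u|²). Then the helicity of E, Λ(t) = ∫_{[0,L]³} E · curl E dV, is differentiable in t with Λ'(t) = −2 ∫_{[0,L]³} ω · (E × curl E) dV. -/

import Mathlib

open scoped BigOperators
open Matrix

noncomputable section

/-- Points of `ℝ³`. -/
abbrev V3 := Fin 3 → ℝ

/-- Spatial partial derivative `∂f/∂xᵢ` of a scalar field. -/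
def pd (i : Fin 3) (f : V3 → ℝ) (x : V3) : ℝ := fderiv ℝ f x (Pi.single i 1)

/-- Spatial gradient `∇f`. -/
def grad3 (f : V3 → ℝ) (x : V3) : V3 := fun i => pd i f x

/-- Spatial divergence `div u`. -/
def div3 (u : V3 → V3) (x : V3) : ℝ := ∑ i, pd i (fun y => u y i) x

/-- Spatial curl `curl u`. -/
def curl3 (u : V3 → V3) (x : V3) : V3 :=
  ![pd 1 (fun y => u y 2) x - pd 2 (fun y => u y 1) x,
    pd 2 (fun y => u y 0) x - pd 0 (fun y => u y 2) x,
    pd 0 (fun y => u y 1) x - pd 1 (fun y => u y 0) x]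

/-- Directional derivative `(v·∇)w` of a vector field. -/
def adv (v : V3) (w : V3 → V3) (x : V3) : V3 := fun i => ∑ j, v j * pd j (fun y => w y i) x

/-- Spatial Laplacian of a scalar field. -/
def lap3 (f : V3 → ℝ) (x : V3) : ℝ := ∑ i, pd i (fun y => pd i f y) x

/-- Componentwise spatial Laplacian of a vector field. -/
def lapv (u : V3 → V3) (x : V3) : V3 := fun i => lap3 (fun y => u y i) x

/-- Time derivative `∂ₜf` of a time-dependent scalar field. -/
def dts (f : ℝ → V3 → ℝ) (t : ℝ) (x : V3) : ℝ := deriv (fun s => f s x) t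

/-- Time derivative `∂ₜu` of a time-dependent vector field. -/
def dtv (u : ℝ → V3 → V3) (t : ℝ) (x : V3) : V3 := fun i => deriv (fun s => u s x i) t

/-- Smoothness (C∞ jointly in time and space) of a scalar field. -/
def SmoothS (f : ℝ → V3 → ℝ) : Prop := ContDiff ℝ (⊤ : ℕ∞) (fun q : ℝ × V3 => f q.1 q.2)

/-- Smoothness (C∞ jointly in time and space) of a vector field. -/
def SmoothV (u : ℝ → V3 → V3) : Prop := ContDiff ℝ (⊤ : ℕ∞) (fun q : ℝ × V3 => u q.1 q.2)

open MeasureTheory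


namespace S19
def J (f : ℝ → V3 → ℝ) : ℝ × V3 → ℝ := fun q => f q.1 q.2
def Df (v : ℝ × V3) (f : ℝ → V3 → ℝ) : ℝ → V3 → ℝ := fun t x => fderiv ℝ (J f) (t, x) v

theorem sS_df {f : ℝ → V3 → ℝ} (hf : SmoothS f) (v : ℝ × V3) : SmoothS (Df v f) := by
  have h1 : ContDiff ℝ (⊤ : ℕ∞) (fderiv ℝ (J f)) := ContDiff.fderiv_right hf (by simp)
  exact (h1.clm_apply contDiff_const : ContDiff ℝ (⊤ : ℕ∞) (fun q : ℝ × V3 => fderiv ℝ (J f) q v))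

theorem hasFDerivAt_slice {f : ℝ → V3 → ℝ} (hf : SmoothS f) (t : ℝ) (x : V3) :
    HasFDerivAt (f t) ((fderiv ℝ (J f) (t, x)).comp (ContinuousLinearMap.inr ℝ ℝ V3)) x := by
  have hF : HasFDerivAt (J f) (fderiv ℝ (J f) (t, x)) (t, x) :=
    (hf.differentiable (by simp) (t, x)).hasFDerivAt
  exact hF.comp x (hasFDerivAt_prodMk_right t x)

theorem pd_eq {f : ℝ → V3 → ℝ} (hf : SmoothS f) (i : Fin 3) (t : ℝ) (x : V3) :
    pd i (f t) x = Df (0, Pi.single i 1) f t x := by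
  rw [pd, (hasFDerivAt_slice hf t x).fderiv]; rfl

theorem hasDerivAt_slice {f : ℝ → V3 → ℝ} (hf : SmoothS f) (t : ℝ) (x : V3) :
    HasDerivAt (fun s => f s x) (Df (1, 0) f t x) t := by
  have hF : HasFDerivAt (J f) (fderiv ℝ (J f) (t, x)) (t, x) :=
    (hf.differentiable (by simp) (t, x)).hasFDerivAt
  exact hF.comp_hasDerivAt t ((hasDerivAt_id t).prodMk (hasDerivAt_const t x))

theorem dts_eq {f : ℝ → V3 → ℝ} (hf : SmoothS f) (t : ℝ) (x : V3) :
    dts f t x = Df (1, 0) f t x := (hasDerivAt_slice hf t x).deriv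

theorem df_comm {f : ℝ → V3 → ℝ} (hf : SmoothS f) (v w : ℝ × V3) (t : ℝ) (x : V3) :
    Df v (Df w f) t x = Df w (Df v f) t x := by
  have key : ∀ a b : ℝ × V3, Df a (Df b f) t x = fderiv ℝ (fderiv ℝ (J f)) (t, x) a b := by
    intro a b
    have hdf : DifferentiableAt ℝ (fderiv ℝ (J f)) (t, x) :=
      ((ContDiff.fderiv_right (m := (⊤ : ℕ∞)) hf (by simp)).differentiable (by simp)) (t, x)
    have : J (Df b f) = fun q => (ContinuousLinearMap.apply ℝ ℝ b) (fderiv ℝ (J f) q) := rfl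
    show fderiv ℝ (J (Df b f)) (t, x) a = _
    rw [this, fderiv_clm_apply (differentiableAt_const _) hdf]
    simp
  rw [key, key]
  have hs : IsSymmSndFDerivAt ℝ (J f) (t, x) := (hf.contDiffAt).isSymmSndFDerivAt (by simp; exact WithTop.coe_le_coe.2 (le_top : ((2:ℕ) : ℕ∞) ≤ ⊤))
  exact hs.eq v w
end S19

namespace S19

theorem sS_add {f g : ℝ → V3 → ℝ} (hf : SmoothS f) (hg : SmoothS g) :
    SmoothS (fun t x => f t x + g t x) := ContDiff.add hf hg

theorem sS_mul {f g : ℝ → V3 → ℝ} (hf : SmoothS f) (hg : SmoothS g) :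
    SmoothS (fun t x => f t x * g t x) := ContDiff.mul hf hg

theorem sS_sub {f g : ℝ → V3 → ℝ} (hf : SmoothS f) (hg : SmoothS g) :
    SmoothS (fun t x => f t x - g t x) := ContDiff.sub hf hg

theorem sS_const (c : ℝ) : SmoothS (fun _ _ => c) := contDiff_const

theorem sS_const_mul {f : ℝ → V3 → ℝ} (hf : SmoothS f) (c : ℝ) :
    SmoothS (fun t x => c * f t x) := ContDiff.mul contDiff_const hf

theorem Df_add {f g : ℝ → V3 → ℝ} (hf : SmoothS f) (hg : SmoothS g) (v : ℝ × V3) (t : ℝ) (x : V3) :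
    Df v (fun t x => f t x + g t x) t x = Df v f t x + Df v g t x := by
  have h1 : DifferentiableAt ℝ (J f) (t, x) := (hf.differentiable (by simp)) _
  have h2 : DifferentiableAt ℝ (J g) (t, x) := (hg.differentiable (by simp)) _
  show fderiv ℝ (fun q => J f q + J g q) (t, x) v = _
  rw [fderiv_fun_add h1 h2]; rfl

theorem Df_mul {f g : ℝ → V3 → ℝ} (hf : SmoothS f) (hg : SmoothS g) (v : ℝ × V3) (t : ℝ) (x : V3) :
    Df v (fun t x => f t x * g t x) t x = Df v f t x * g t x + f t x * Df v g t x := by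
  have h1 : DifferentiableAt ℝ (J f) (t, x) := (hf.differentiable (by simp)) _
  have h2 : DifferentiableAt ℝ (J g) (t, x) := (hg.differentiable (by simp)) _
  show fderiv ℝ (fun q => J f q * J g q) (t, x) v = _
  rw [fderiv_fun_mul h1 h2]
  show J f (t,x) * fderiv ℝ (J g) (t,x) v + J g (t,x) * fderiv ℝ (J f) (t,x) v
    = fderiv ℝ (J f) (t,x) v * J g (t,x) + J f (t,x) * fderiv ℝ (J g) (t,x) v
  ring

theorem Df_neg {f : ℝ → V3 → ℝ} (v : ℝ × V3) (t : ℝ) (x : V3) :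
    Df v (fun t x => -(f t x)) t x = -(Df v f t x) := by
  show fderiv ℝ (fun q => -(J f q)) (t, x) v = _
  rw [fderiv_fun_neg]; rfl

theorem Df_sub {f g : ℝ → V3 → ℝ} (hf : SmoothS f) (hg : SmoothS g) (v : ℝ × V3) (t : ℝ) (x : V3) :
    Df v (fun t x => f t x - g t x) t x = Df v f t x - Df v g t x := by
  have h1 : DifferentiableAt ℝ (J f) (t, x) := (hf.differentiable (by simp)) _
  have h2 : DifferentiableAt ℝ (J g) (t, x) := (hg.differentiable (by simp)) _
  show fderiv ℝ (fun q => J f q - J g q) (t, x) v = _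
  rw [fderiv_fun_sub h1 h2]; rfl

theorem Df_const (c : ℝ) (v : ℝ × V3) (t : ℝ) (x : V3) :
    Df v (fun _ _ => c) t x = 0 := by
  show fderiv ℝ (fun _ : ℝ × V3 => c) (t, x) v = 0
  rw [fderiv_fun_const]; rfl

theorem Df_const_mul {f : ℝ → V3 → ℝ} (hf : SmoothS f) (c : ℝ) (v : ℝ × V3) (t : ℝ) (x : V3) :
    Df v (fun t x => c * f t x) t x = c * Df v f t x := by
  rw [Df_mul (sS_const c) hf, Df_const]; ring

/-- Periodicity predicate. -/
def Per (L : ℝ) (f : ℝ → V3 → ℝ) : Prop :=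
  ∀ t x (i : Fin 3), f t (x + L • (Pi.single i 1 : V3)) = f t x

theorem Per.df {L : ℝ} {f : ℝ → V3 → ℝ} (hf : SmoothS f) (hper : Per L f) (v : ℝ × V3) :
    Per L (Df v f) := by
  intro t x i
  set c : V3 := L • (Pi.single i 1 : V3)
  have hJ : (fun q : ℝ × V3 => J f (q + ((0 : ℝ), c))) = J f := by
    funext q
    show f (q.1 + 0) (q.2 + c) = f q.1 q.2
    rw [add_zero]; exact hper q.1 q.2 i
  have hφ : HasFDerivAt (fun q : ℝ × V3 => q + ((0:ℝ), c))
      (ContinuousLinearMap.id ℝ (ℝ × V3)) (t, x) :=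
    (hasFDerivAt_id ((t, x) : ℝ × V3)).add_const _
  have hd : HasFDerivAt (J f) (fderiv ℝ (J f) ((t, x) + ((0:ℝ), c))) ((t, x) + ((0:ℝ), c)) :=
    (hf.differentiable (by simp) _).hasFDerivAt
  have h1 : fderiv ℝ (fun q : ℝ × V3 => J f (q + ((0:ℝ), c))) (t, x)
      = fderiv ℝ (J f) ((t, x) + ((0:ℝ), c)) := by
    have h2 := (hd.comp ((t, x) : ℝ × V3) hφ).fderiv
    rw [ContinuousLinearMap.comp_id] at h2
    exact h2
  show fderiv ℝ (J f) (t, x + c) v = fderiv ℝ (J f) (t, x) v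
  have h3 : ((t, x) + ((0:ℝ), c) : ℝ × V3) = (t, x + c) := by
    ext
    · exact add_zero t
    · rfl
  rw [← h3, ← h1, hJ]

theorem Per.add {L : ℝ} {f g : ℝ → V3 → ℝ} (hf : Per L f) (hg : Per L g) :
    Per L (fun t x => f t x + g t x) := fun t x i => by simp only [hf t x i, hg t x i]

theorem Per.mul {L : ℝ} {f g : ℝ → V3 → ℝ} (hf : Per L f) (hg : Per L g) :
    Per L (fun t x => f t x * g t x) := fun t x i => by simp only [hf t x i, hg t x i]

theorem Per.sub {L : ℝ} {f g : ℝ → V3 → ℝ} (hf : Per L f) (hg : Per L g) :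
    Per L (fun t x => f t x - g t x) := fun t x i => by simp only [hf t x i, hg t x i]

theorem Per.const_mul {L : ℝ} {f : ℝ → V3 → ℝ} (hf : Per L f) (c : ℝ) :
    Per L (fun t x => c * f t x) := fun t x i => by simp only [hf t x i]

end S19

namespace S19

theorem hasDerivAt_int {G : ℝ → V3 → ℝ} (hG : SmoothS G) (L : ℝ) (t₀ : ℝ) :
    HasDerivAt (fun t => ∫ x in Set.Icc (0 : V3) (fun _ => L), G t x)
      (∫ x in Set.Icc (0 : V3) (fun _ => L), Df (1, 0) G t₀ x) t₀ := by
  set K := Set.Icc (0 : V3) (fun _ => L) with hK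
  have hKc : IsCompact K := isCompact_Icc
  have hKm : MeasurableSet K := measurableSet_Icc
  have hGd : SmoothS (Df (1, 0) G) := sS_df hG _
  have hslice : ∀ t : ℝ, Continuous (fun x => G t x) := fun t =>
    hG.continuous.comp (continuous_const.prodMk continuous_id)
  have hslice' : ∀ t : ℝ, Continuous (fun x => Df (1, 0) G t x) := fun t =>
    hGd.continuous.comp (continuous_const.prodMk continuous_id)
  -- bound
  have hScompact : IsCompact ((Set.Icc (t₀ - 1) (t₀ + 1)) ×ˢ K) := isCompact_Icc.prod hKc
  obtain ⟨C, hC⟩ := hScompact.exists_bound_of_continuousOn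
    (hGd.continuous.continuousOn (s := (Set.Icc (t₀ - 1) (t₀ + 1)) ×ˢ K))
  have main := hasDerivAt_integral_of_dominated_loc_of_deriv_le (μ := volume.restrict K)
    (F := fun t x => G t x) (F' := fun t x => Df (1, 0) G t x) (bound := fun _ => C)
    (x₀ := t₀) (s := Metric.ball t₀ 1) (Metric.ball_mem_nhds t₀ one_pos)
    (Filter.Eventually.of_forall fun t => (hslice t).aestronglyMeasurable)
    ((hslice t₀).continuousOn.integrableOn_compact hKc)
    ((hslice' t₀).aestronglyMeasurable)
    ?_ ?_ ?_
  · exact main.2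
  · -- bound
    refine (ae_restrict_mem hKm).mono fun x hx t ht => ?_
    have ht' : t ∈ Set.Icc (t₀ - 1) (t₀ + 1) := by
      rw [Metric.mem_ball, Real.dist_eq] at ht
      constructor <;> [linarith [abs_lt.1 ht]; linarith [(abs_lt.1 ht).2]]
    exact hC (t, x) ⟨ht', hx⟩
  · exact (integrableOn_const hKc.measure_lt_top.ne)
  · exact Filter.Eventually.of_forall fun x t _ => hasDerivAt_slice hG t x

theorem insertNth_eq_add (i : Fin 3) (c : ℝ) (y : Fin 2 → ℝ) :
    (Fin.insertNth i c y : V3) = Fin.insertNth i 0 y + c • (Pi.single i 1 : V3) := by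
  funext j
  refine Fin.succAboveCases i ?_ ?_ j
  · simp
  · intro k
    simp [Fin.insertNth_apply_succAbove, Pi.single_eq_of_ne (Fin.succAbove_ne i k)]

theorem integral_div_zero (L : ℝ) (hL : 0 < L) (W : V3 → V3)
    (hW : ContDiff ℝ (⊤ : ℕ∞) W)
    (hper : ∀ x (i : Fin 3), W (x + L • (Pi.single i 1 : V3)) = W x) :
    (∫ x in Set.Icc (0 : V3) (fun _ => L), ∑ i, pd i (fun y => W y i) x) = 0 := by
  have hpd : ∀ (x : V3) (i : Fin 3), pd i (fun y => W y i) x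
      = fderiv ℝ W x (Pi.single i 1) i := by
    intro x i
    have h0 : HasFDerivAt W (fderiv ℝ W x) x := (hW.differentiable (by simp) x).hasFDerivAt
    have h1 := (ContinuousLinearMap.proj (R := ℝ) (φ := fun _ : Fin 3 => ℝ) i).hasFDerivAt.comp x h0
    have h1' : HasFDerivAt (fun y => W y i)
        ((ContinuousLinearMap.proj (R := ℝ) (φ := fun _ : Fin 3 => ℝ) i).comp (fderiv ℝ W x)) x := h1
    rw [pd, h1'.fderiv]; rfl
  have hcont' : Continuous (fun x => ∑ i : Fin 3, fderiv ℝ W x (Pi.single i 1) i) := by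
    apply continuous_finset_sum
    intro i _
    exact (continuous_apply i).comp
      (((ContinuousLinearMap.apply ℝ V3 (Pi.single i 1)).continuous).comp
        (hW.fderiv_right (m := (⊤ : ℕ∞)) (by simp)).continuous)
  have key := MeasureTheory.integral_divergence_of_hasFDerivAt_off_countable
    (a := (0 : V3)) (b := fun _ => L) (n := 2)
    (fun i => (hL.le : (0:V3) i ≤ L)) W (fun x => fderiv ℝ W x) ∅ Set.countable_empty
    hW.continuous.continuousOn
    (fun x _ => (hW.differentiable (by simp) x).hasFDerivAt)
    (hcont'.continuousOn.integrableOn_compact isCompact_Icc)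
  rw [show (fun x => ∑ i, pd i (fun y => W y i) x)
      = fun x => ∑ i : Fin 3, fderiv ℝ W x (Pi.single i 1) i from
      funext fun x => Finset.sum_congr rfl fun i _ => hpd x i, key]
  apply Finset.sum_eq_zero
  intro i _
  have : ∀ y : Fin 2 → ℝ, W (Fin.insertNth i ((fun _ => L : V3) i) y) i
      = W (Fin.insertNth i ((0 : V3) i) y) i := by
    intro y
    have h0 : ((0 : V3) i : ℝ) = 0 := rfl
    have hb : ((fun _ => L : V3) i : ℝ) = L := rfl
    rw [h0, hb, insertNth_eq_add, hper]
  simp only [this, sub_self]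

end S19

namespace S19

def X0 : ℝ × V3 := (0, Pi.single 0 1)
def X1 : ℝ × V3 := (0, Pi.single 1 1)
def X2 : ℝ × V3 := (0, Pi.single 2 1)
def Tv : ℝ × V3 := (1, 0)

/-- div (A × B) = B · curl A - A · curl B -/
theorem div_cross (A0 A1 A2 B0 B1 B2 : ℝ → V3 → ℝ)
    (hA0 : SmoothS A0) (hA1 : SmoothS A1) (hA2 : SmoothS A2)
    (hB0 : SmoothS B0) (hB1 : SmoothS B1) (hB2 : SmoothS B2) (t : ℝ) (x : V3) :
    Df X0 (fun t x => A1 t x * B2 t x - A2 t x * B1 t x) t x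
      + Df X1 (fun t x => A2 t x * B0 t x - A0 t x * B2 t x) t x
      + Df X2 (fun t x => A0 t x * B1 t x - A1 t x * B0 t x) t x
    = (B0 t x * (Df X1 A2 t x - Df X2 A1 t x)
        + B1 t x * (Df X2 A0 t x - Df X0 A2 t x)
        + B2 t x * (Df X0 A1 t x - Df X1 A0 t x))
      - (A0 t x * (Df X1 B2 t x - Df X2 B1 t x)
        + A1 t x * (Df X2 B0 t x - Df X0 B2 t x)
        + A2 t x * (Df X0 B1 t x - Df X1 B0 t x)) := by
  rw [Df_sub (sS_mul hA1 hB2) (sS_mul hA2 hB1),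
    Df_sub (sS_mul hA2 hB0) (sS_mul hA0 hB2),
    Df_sub (sS_mul hA0 hB1) (sS_mul hA1 hB0),
    Df_mul hA1 hB2, Df_mul hA2 hB1, Df_mul hA2 hB0, Df_mul hA0 hB2,
    Df_mul hA0 hB1, Df_mul hA1 hB0]
  ring

/-- grad f · curl E = div (f • curl E), i.e. the divergence of a curl vanishes. -/
theorem grad_dot_curl (f E0 E1 E2 : ℝ → V3 → ℝ)
    (hf : SmoothS f) (hE0 : SmoothS E0) (hE1 : SmoothS E1) (hE2 : SmoothS E2) (t : ℝ) (x : V3) :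
    Df X0 f t x * (Df X1 E2 t x - Df X2 E1 t x)
      + Df X1 f t x * (Df X2 E0 t x - Df X0 E2 t x)
      + Df X2 f t x * (Df X0 E1 t x - Df X1 E0 t x)
    = Df X0 (fun t x => f t x * (Df X1 E2 t x - Df X2 E1 t x)) t x
      + Df X1 (fun t x => f t x * (Df X2 E0 t x - Df X0 E2 t x)) t x
      + Df X2 (fun t x => f t x * (Df X0 E1 t x - Df X1 E0 t x)) t x := by
  rw [Df_mul hf (sS_sub (sS_df hE2 X1) (sS_df hE1 X2)),
    Df_mul hf (sS_sub (sS_df hE0 X2) (sS_df hE2 X0)),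
    Df_mul hf (sS_sub (sS_df hE1 X0) (sS_df hE0 X1)),
    Df_sub (sS_df hE2 X1) (sS_df hE1 X2),
    Df_sub (sS_df hE0 X2) (sS_df hE2 X0),
    Df_sub (sS_df hE1 X0) (sS_df hE0 X1)]
  have c1 := df_comm hE0 X1 X2 t x
  have c2 := df_comm hE1 X0 X2 t x
  have c3 := df_comm hE2 X0 X1 t x
  linear_combination (-(f t x)) * c3 - f t x * c1 + f t x * c2

end S19

namespace S19
theorem sS_cont {f : ℝ → V3 → ℝ} (hf : SmoothS f) (t : ℝ) : Continuous (f t) :=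
  hf.continuous.comp (continuous_const.prodMk continuous_id)
theorem sS_cd {f : ℝ → V3 → ℝ} (hf : SmoothS f) (t : ℝ) : ContDiff ℝ (⊤ : ℕ∞) (f t) :=
  hf.comp (contDiff_const.prodMk contDiff_id)
end S19

open S19 in
/-- evolution of the Bernoulli-vector helicity on a periodic box. -/
theorem stmt19
    (L : ℝ) (hL : 0 < L)
    (u : ℝ → V3 → V3) (p : ℝ → V3 → ℝ)
    (hu : SmoothV u) (hp : SmoothS p)
    (huper : ∀ t x (i : Fin 3), u t (x + L • (Pi.single i 1 : V3)) = u t x)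
    (hpper : ∀ t x (i : Fin 3), p t (x + L • (Pi.single i 1 : V3)) = p t x)
    (hdiv : ∀ t x, div3 (u t) x = 0)
    (heuler : ∀ t x, dtv u t x + adv (u t x) (u t) x = -grad3 (p t) x)
    (E : ℝ → V3 → V3)
    (hE : ∀ t x, E t x = curl3 (u t) x ⨯₃ u t x
      + grad3 (fun y => p t y + (1 / 2) * (u t y ⬝ᵥ u t y)) x)
    (Λ : ℝ → ℝ)
    (hΛ : ∀ t, Λ t = ∫ x in Set.Icc (0 : V3) (fun _ => L), E t x ⬝ᵥ curl3 (E t) x) :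
    ∀ t, HasDerivAt Λ
      (-2 * ∫ x in Set.Icc (0 : V3) (fun _ => L),
        curl3 (u t) x ⬝ᵥ (E t x ⨯₃ curl3 (E t) x)) t := by
  intro t₀
  classical
  have hsu0 : SmoothS (fun t x => u t x 0) :=
    (ContinuousLinearMap.proj (R := ℝ) (φ := fun _ : Fin 3 => ℝ) (0 : Fin 3)).contDiff.comp hu
  have hsu1 : SmoothS (fun t x => u t x 1) :=
    (ContinuousLinearMap.proj (R := ℝ) (φ := fun _ : Fin 3 => ℝ) (1 : Fin 3)).contDiff.comp hu
  have hsu2 : SmoothS (fun t x => u t x 2) :=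
    (ContinuousLinearMap.proj (R := ℝ) (φ := fun _ : Fin 3 => ℝ) (2 : Fin 3)).contDiff.comp hu
  set hh : ℝ → V3 → ℝ := fun t x => p t x + 1 / 2 * (u t x ⬝ᵥ u t x) with hhhd
  have hhex : hh = fun t x => p t x + 1 / 2 * ((u t x 0 * u t x 0 + u t x 1 * u t x 1)
      + u t x 2 * u t x 2) := by
    funext t x
    simp [hhhd, dotProduct, Fin.sum_univ_three]
  have hshh : SmoothS hh := by
    rw [hhex]
    exact sS_add hp (sS_const_mul (sS_add (sS_add (sS_mul hsu0 hsu0) (sS_mul hsu1 hsu1))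
      (sS_mul hsu2 hsu2)) _)
  have hqu0 : Per L (fun t x => u t x 0) := fun t x j => congrFun (huper t x j) 0
  have hqu1 : Per L (fun t x => u t x 1) := fun t x j => congrFun (huper t x j) 1
  have hqu2 : Per L (fun t x => u t x 2) := fun t x j => congrFun (huper t x j) 2
  have hqhh : Per L hh := by
    intro t x j
    simp only [hhhd]
    rw [huper, hpper]
  have bu00 : ∀ (t : ℝ) (x : V3), pd 0 (fun y => u t y 0) x = Df X0 (fun t x => u t x 0) t x :=
    fun t x => pd_eq hsu0 0 t x
  have bu01 : ∀ (t : ℝ) (x : V3), pd 0 (fun y => u t y 1) x = Df X0 (fun t x => u t x 1) t x :=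
    fun t x => pd_eq hsu1 0 t x
  have bu02 : ∀ (t : ℝ) (x : V3), pd 0 (fun y => u t y 2) x = Df X0 (fun t x => u t x 2) t x :=
    fun t x => pd_eq hsu2 0 t x
  have bu10 : ∀ (t : ℝ) (x : V3), pd 1 (fun y => u t y 0) x = Df X1 (fun t x => u t x 0) t x :=
    fun t x => pd_eq hsu0 1 t x
  have bu11 : ∀ (t : ℝ) (x : V3), pd 1 (fun y => u t y 1) x = Df X1 (fun t x => u t x 1) t x :=
    fun t x => pd_eq hsu1 1 t x
  have bu12 : ∀ (t : ℝ) (x : V3), pd 1 (fun y => u t y 2) x = Df X1 (fun t x => u t x 2) t x :=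
    fun t x => pd_eq hsu2 1 t x
  have bu20 : ∀ (t : ℝ) (x : V3), pd 2 (fun y => u t y 0) x = Df X2 (fun t x => u t x 0) t x :=
    fun t x => pd_eq hsu0 2 t x
  have bu21 : ∀ (t : ℝ) (x : V3), pd 2 (fun y => u t y 1) x = Df X2 (fun t x => u t x 1) t x :=
    fun t x => pd_eq hsu1 2 t x
  have bu22 : ∀ (t : ℝ) (x : V3), pd 2 (fun y => u t y 2) x = Df X2 (fun t x => u t x 2) t x :=
    fun t x => pd_eq hsu2 2 t x
  have bhh : ∀ (i : Fin 3) (t : ℝ) (x : V3),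
      pd i (fun y => p t y + 1 / 2 * (u t y ⬝ᵥ u t y)) x = Df (0, Pi.single i 1) hh t x :=
    fun i t x => pd_eq hshh i t x
  have hee0 : (fun t x => E t x 0) = fun t x => ((Df X2 (fun t x => u t x 0) t x - Df X0 (fun t x => u t x 2) t x) * u t x 2 - (Df X0 (fun t x => u t x 1) t x - Df X1 (fun t x => u t x 0) t x) * u t x 1) + Df X0 hh t x := by
    funext t x
    rw [show E t x 0 = (curl3 (u t) x ⨯₃ u t x
      + grad3 (fun y => p t y + (1 / 2) * (u t y ⬝ᵥ u t y)) x) 0 from congrFun (hE t x) 0]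
    simp only [Pi.add_apply, cross_apply, curl3, grad3, Matrix.cons_val_zero, Matrix.cons_val_one,
      Matrix.head_cons, Matrix.cons_val_two, Matrix.tail_cons]
    simp only [bu00, bu01, bu02, bu10, bu11, bu12, bu20, bu21, bu22]
    rw [show pd 0 (fun y => p t y + 1 / 2 * (u t y ⬝ᵥ u t y)) x
      = Df X0 hh t x from bhh 0 t x]
    try ring
  have hee1 : (fun t x => E t x 1) = fun t x => ((Df X0 (fun t x => u t x 1) t x - Df X1 (fun t x => u t x 0) t x) * u t x 0 - (Df X1 (fun t x => u t x 2) t x - Df X2 (fun t x => u t x 1) t x) * u t x 2) + Df X1 hh t x := by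
    funext t x
    rw [show E t x 1 = (curl3 (u t) x ⨯₃ u t x
      + grad3 (fun y => p t y + (1 / 2) * (u t y ⬝ᵥ u t y)) x) 1 from congrFun (hE t x) 1]
    simp only [Pi.add_apply, cross_apply, curl3, grad3, Matrix.cons_val_zero, Matrix.cons_val_one,
      Matrix.head_cons, Matrix.cons_val_two, Matrix.tail_cons]
    simp only [bu00, bu01, bu02, bu10, bu11, bu12, bu20, bu21, bu22]
    rw [show pd 1 (fun y => p t y + 1 / 2 * (u t y ⬝ᵥ u t y)) x
      = Df X1 hh t x from bhh 1 t x]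
    try ring
  have hee2 : (fun t x => E t x 2) = fun t x => ((Df X1 (fun t x => u t x 2) t x - Df X2 (fun t x => u t x 1) t x) * u t x 1 - (Df X2 (fun t x => u t x 0) t x - Df X0 (fun t x => u t x 2) t x) * u t x 0) + Df X2 hh t x := by
    funext t x
    rw [show E t x 2 = (curl3 (u t) x ⨯₃ u t x
      + grad3 (fun y => p t y + (1 / 2) * (u t y ⬝ᵥ u t y)) x) 2 from congrFun (hE t x) 2]
    simp only [Pi.add_apply, cross_apply, curl3, grad3, Matrix.cons_val_zero, Matrix.cons_val_one,
      Matrix.head_cons, Matrix.cons_val_two, Matrix.tail_cons]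
    simp only [bu00, bu01, bu02, bu10, bu11, bu12, bu20, bu21, bu22]
    rw [show pd 2 (fun y => p t y + 1 / 2 * (u t y ⬝ᵥ u t y)) x
      = Df X2 hh t x from bhh 2 t x]
    try ring
  have hse0 : SmoothS (fun t x => E t x 0) := by
    rw [hee0]
    exact sS_add (sS_sub (sS_mul (sS_sub (sS_df hsu0 X2) (sS_df hsu2 X0)) hsu2) (sS_mul (sS_sub (sS_df hsu1 X0) (sS_df hsu0 X1)) hsu1)) (sS_df hshh X0)
  have hse1 : SmoothS (fun t x => E t x 1) := by
    rw [hee1]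
    exact sS_add (sS_sub (sS_mul (sS_sub (sS_df hsu1 X0) (sS_df hsu0 X1)) hsu0) (sS_mul (sS_sub (sS_df hsu2 X1) (sS_df hsu1 X2)) hsu2)) (sS_df hshh X1)
  have hse2 : SmoothS (fun t x => E t x 2) := by
    rw [hee2]
    exact sS_add (sS_sub (sS_mul (sS_sub (sS_df hsu2 X1) (sS_df hsu1 X2)) hsu1) (sS_mul (sS_sub (sS_df hsu0 X2) (sS_df hsu2 X0)) hsu0)) (sS_df hshh X2)
  have hqe0 : Per L (fun t x => E t x 0) := by
    rw [hee0]
    exact Per.add (Per.sub (Per.mul (Per.sub (Per.df hsu0 hqu0 X2) (Per.df hsu2 hqu2 X0)) hqu2) (Per.mul (Per.sub (Per.df hsu1 hqu1 X0) (Per.df hsu0 hqu0 X1)) hqu1)) (Per.df hshh hqhh X0)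
  have hqe1 : Per L (fun t x => E t x 1) := by
    rw [hee1]
    exact Per.add (Per.sub (Per.mul (Per.sub (Per.df hsu1 hqu1 X0) (Per.df hsu0 hqu0 X1)) hqu0) (Per.mul (Per.sub (Per.df hsu2 hqu2 X1) (Per.df hsu1 hqu1 X2)) hqu2)) (Per.df hshh hqhh X1)
  have hqe2 : Per L (fun t x => E t x 2) := by
    rw [hee2]
    exact Per.add (Per.sub (Per.mul (Per.sub (Per.df hsu2 hqu2 X1) (Per.df hsu1 hqu1 X2)) hqu1) (Per.mul (Per.sub (Per.df hsu0 hqu0 X2) (Per.df hsu2 hqu2 X0)) hqu0)) (Per.df hshh hqhh X2)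
  have hDXhh : ∀ (v : ℝ × V3) (t : ℝ) (x : V3), Df v hh t x = Df v p t x
      + (u t x 0 * Df v (fun t x => u t x 0) t x + u t x 1 * Df v (fun t x => u t x 1) t x + u t x 2 * Df v (fun t x => u t x 2) t x) := by
    intro v t x
    rw [hhex, Df_add hp (sS_const_mul (sS_add (sS_add (sS_mul hsu0 hsu0) (sS_mul hsu1 hsu1)) (sS_mul hsu2 hsu2)) (1/2)),
      Df_const_mul (sS_add (sS_add (sS_mul hsu0 hsu0) (sS_mul hsu1 hsu1)) (sS_mul hsu2 hsu2)) (1/2),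
      Df_add (sS_add (sS_mul hsu0 hsu0) (sS_mul hsu1 hsu1)) (sS_mul hsu2 hsu2),
      Df_add (sS_mul hsu0 hsu0) (sS_mul hsu1 hsu1),
      Df_mul hsu0 hsu0, Df_mul hsu1 hsu1, Df_mul hsu2 hsu2]
    ring
  have hTu0 : ∀ (t : ℝ) (x : V3), Df Tv (fun t x => u t x 0) t x = -(E t x 0) := by
    intro t x
    have h := congrFun (heuler t x) 0
    simp only [Pi.add_apply, Pi.neg_apply, adv, Fin.sum_univ_three, grad3] at h
    rw [show dtv u t x 0 = Df Tv (fun t x => u t x 0) t x from dts_eq hsu0 t x] at h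
    simp only [bu00, bu01, bu02, bu10, bu11, bu12, bu20, bu21, bu22] at h
    rw [show pd 0 (p t) x = Df X0 p t x from pd_eq hp 0 t x] at h
    have he := congrFun (congrFun hee0 t) x
    have hx := hDXhh X0 t x
    linear_combination h + he + hx
  have hTu1 : ∀ (t : ℝ) (x : V3), Df Tv (fun t x => u t x 1) t x = -(E t x 1) := by
    intro t x
    have h := congrFun (heuler t x) 1
    simp only [Pi.add_apply, Pi.neg_apply, adv, Fin.sum_univ_three, grad3] at h
    rw [show dtv u t x 1 = Df Tv (fun t x => u t x 1) t x from dts_eq hsu1 t x] at h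
    simp only [bu00, bu01, bu02, bu10, bu11, bu12, bu20, bu21, bu22] at h
    rw [show pd 1 (p t) x = Df X1 p t x from pd_eq hp 1 t x] at h
    have he := congrFun (congrFun hee1 t) x
    have hx := hDXhh X1 t x
    linear_combination h + he + hx
  have hTu2 : ∀ (t : ℝ) (x : V3), Df Tv (fun t x => u t x 2) t x = -(E t x 2) := by
    intro t x
    have h := congrFun (heuler t x) 2
    simp only [Pi.add_apply, Pi.neg_apply, adv, Fin.sum_univ_three, grad3] at h
    rw [show dtv u t x 2 = Df Tv (fun t x => u t x 2) t x from dts_eq hsu2 t x] at h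
    simp only [bu00, bu01, bu02, bu10, bu11, bu12, bu20, bu21, bu22] at h
    rw [show pd 2 (p t) x = Df X2 p t x from pd_eq hp 2 t x] at h
    have he := congrFun (congrFun hee2 t) x
    have hx := hDXhh X2 t x
    linear_combination h + he + hx
  have hdE0 : ∀ (t : ℝ) (x : V3), Df Tv (fun t x => E t x 0) t x
      = -((Df X2 (fun t x => E t x 0) t x - Df X0 (fun t x => E t x 2) t x) * u t x 2 - (Df X0 (fun t x => E t x 1) t x - Df X1 (fun t x => E t x 0) t x) * u t x 1)
        - ((Df X2 (fun t x => u t x 0) t x - Df X0 (fun t x => u t x 2) t x) * E t x 2 - (Df X0 (fun t x => u t x 1) t x - Df X1 (fun t x => u t x 0) t x) * E t x 1) + Df X0 (Df Tv hh) t x := by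
    intro t x
    rw [show Df Tv (fun t x => E t x 0) t x = Df Tv (fun t x => ((Df X2 (fun t x => u t x 0) t x - Df X0 (fun t x => u t x 2) t x) * u t x 2 - (Df X0 (fun t x => u t x 1) t x - Df X1 (fun t x => u t x 0) t x) * u t x 1) + Df X0 hh t x) t x from congrArg (fun f => Df Tv f t x) hee0]
    rw [Df_add (sS_sub (sS_mul (sS_sub (sS_df hsu0 X2) (sS_df hsu2 X0)) hsu2) (sS_mul (sS_sub (sS_df hsu1 X0) (sS_df hsu0 X1)) hsu1)) (sS_df hshh X0),
      Df_sub (sS_mul (sS_sub (sS_df hsu0 X2) (sS_df hsu2 X0)) hsu2) (sS_mul (sS_sub (sS_df hsu1 X0) (sS_df hsu0 X1)) hsu1),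
      Df_mul (sS_sub (sS_df hsu0 X2) (sS_df hsu2 X0)) hsu2, Df_mul (sS_sub (sS_df hsu1 X0) (sS_df hsu0 X1)) hsu1,
      Df_sub (sS_df hsu0 X2) (sS_df hsu2 X0),
      Df_sub (sS_df hsu1 X0) (sS_df hsu0 X1)]
    rw [show Df Tv (Df X2 (fun t x => u t x 0)) t x = -(Df X2 (fun t x => E t x 0) t x) from by
      rw [df_comm hsu0 Tv X2 t x,
        show Df Tv (fun t x => u t x 0) = fun t x => -(E t x 0) from funext fun t => funext fun x => hTu0 t x]
      exact Df_neg X2 t x]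
    rw [show Df Tv (Df X0 (fun t x => u t x 2)) t x = -(Df X0 (fun t x => E t x 2) t x) from by
      rw [df_comm hsu2 Tv X0 t x,
        show Df Tv (fun t x => u t x 2) = fun t x => -(E t x 2) from funext fun t => funext fun x => hTu2 t x]
      exact Df_neg X0 t x]
    rw [show Df Tv (Df X0 (fun t x => u t x 1)) t x = -(Df X0 (fun t x => E t x 1) t x) from by
      rw [df_comm hsu1 Tv X0 t x,
        show Df Tv (fun t x => u t x 1) = fun t x => -(E t x 1) from funext fun t => funext fun x => hTu1 t x]
      exact Df_neg X0 t x]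
    rw [show Df Tv (Df X1 (fun t x => u t x 0)) t x = -(Df X1 (fun t x => E t x 0) t x) from by
      rw [df_comm hsu0 Tv X1 t x,
        show Df Tv (fun t x => u t x 0) = fun t x => -(E t x 0) from funext fun t => funext fun x => hTu0 t x]
      exact Df_neg X1 t x]
    rw [hTu2 t x, hTu1 t x, df_comm hshh Tv X0 t x]
    ring
  have hdE1 : ∀ (t : ℝ) (x : V3), Df Tv (fun t x => E t x 1) t x
      = -((Df X0 (fun t x => E t x 1) t x - Df X1 (fun t x => E t x 0) t x) * u t x 0 - (Df X1 (fun t x => E t x 2) t x - Df X2 (fun t x => E t x 1) t x) * u t x 2)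
        - ((Df X0 (fun t x => u t x 1) t x - Df X1 (fun t x => u t x 0) t x) * E t x 0 - (Df X1 (fun t x => u t x 2) t x - Df X2 (fun t x => u t x 1) t x) * E t x 2) + Df X1 (Df Tv hh) t x := by
    intro t x
    rw [show Df Tv (fun t x => E t x 1) t x = Df Tv (fun t x => ((Df X0 (fun t x => u t x 1) t x - Df X1 (fun t x => u t x 0) t x) * u t x 0 - (Df X1 (fun t x => u t x 2) t x - Df X2 (fun t x => u t x 1) t x) * u t x 2) + Df X1 hh t x) t x from congrArg (fun f => Df Tv f t x) hee1]
    rw [Df_add (sS_sub (sS_mul (sS_sub (sS_df hsu1 X0) (sS_df hsu0 X1)) hsu0) (sS_mul (sS_sub (sS_df hsu2 X1) (sS_df hsu1 X2)) hsu2)) (sS_df hshh X1),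
      Df_sub (sS_mul (sS_sub (sS_df hsu1 X0) (sS_df hsu0 X1)) hsu0) (sS_mul (sS_sub (sS_df hsu2 X1) (sS_df hsu1 X2)) hsu2),
      Df_mul (sS_sub (sS_df hsu1 X0) (sS_df hsu0 X1)) hsu0, Df_mul (sS_sub (sS_df hsu2 X1) (sS_df hsu1 X2)) hsu2,
      Df_sub (sS_df hsu1 X0) (sS_df hsu0 X1),
      Df_sub (sS_df hsu2 X1) (sS_df hsu1 X2)]
    rw [show Df Tv (Df X0 (fun t x => u t x 1)) t x = -(Df X0 (fun t x => E t x 1) t x) from by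
      rw [df_comm hsu1 Tv X0 t x,
        show Df Tv (fun t x => u t x 1) = fun t x => -(E t x 1) from funext fun t => funext fun x => hTu1 t x]
      exact Df_neg X0 t x]
    rw [show Df Tv (Df X1 (fun t x => u t x 0)) t x = -(Df X1 (fun t x => E t x 0) t x) from by
      rw [df_comm hsu0 Tv X1 t x,
        show Df Tv (fun t x => u t x 0) = fun t x => -(E t x 0) from funext fun t => funext fun x => hTu0 t x]
      exact Df_neg X1 t x]
    rw [show Df Tv (Df X1 (fun t x => u t x 2)) t x = -(Df X1 (fun t x => E t x 2) t x) from by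
      rw [df_comm hsu2 Tv X1 t x,
        show Df Tv (fun t x => u t x 2) = fun t x => -(E t x 2) from funext fun t => funext fun x => hTu2 t x]
      exact Df_neg X1 t x]
    rw [show Df Tv (Df X2 (fun t x => u t x 1)) t x = -(Df X2 (fun t x => E t x 1) t x) from by
      rw [df_comm hsu1 Tv X2 t x,
        show Df Tv (fun t x => u t x 1) = fun t x => -(E t x 1) from funext fun t => funext fun x => hTu1 t x]
      exact Df_neg X2 t x]
    rw [hTu0 t x, hTu2 t x, df_comm hshh Tv X1 t x]
    ring
  have hdE2 : ∀ (t : ℝ) (x : V3), Df Tv (fun t x => E t x 2) t x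
      = -((Df X1 (fun t x => E t x 2) t x - Df X2 (fun t x => E t x 1) t x) * u t x 1 - (Df X2 (fun t x => E t x 0) t x - Df X0 (fun t x => E t x 2) t x) * u t x 0)
        - ((Df X1 (fun t x => u t x 2) t x - Df X2 (fun t x => u t x 1) t x) * E t x 1 - (Df X2 (fun t x => u t x 0) t x - Df X0 (fun t x => u t x 2) t x) * E t x 0) + Df X2 (Df Tv hh) t x := by
    intro t x
    rw [show Df Tv (fun t x => E t x 2) t x = Df Tv (fun t x => ((Df X1 (fun t x => u t x 2) t x - Df X2 (fun t x => u t x 1) t x) * u t x 1 - (Df X2 (fun t x => u t x 0) t x - Df X0 (fun t x => u t x 2) t x) * u t x 0) + Df X2 hh t x) t x from congrArg (fun f => Df Tv f t x) hee2]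
    rw [Df_add (sS_sub (sS_mul (sS_sub (sS_df hsu2 X1) (sS_df hsu1 X2)) hsu1) (sS_mul (sS_sub (sS_df hsu0 X2) (sS_df hsu2 X0)) hsu0)) (sS_df hshh X2),
      Df_sub (sS_mul (sS_sub (sS_df hsu2 X1) (sS_df hsu1 X2)) hsu1) (sS_mul (sS_sub (sS_df hsu0 X2) (sS_df hsu2 X0)) hsu0),
      Df_mul (sS_sub (sS_df hsu2 X1) (sS_df hsu1 X2)) hsu1, Df_mul (sS_sub (sS_df hsu0 X2) (sS_df hsu2 X0)) hsu0,
      Df_sub (sS_df hsu2 X1) (sS_df hsu1 X2),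
      Df_sub (sS_df hsu0 X2) (sS_df hsu2 X0)]
    rw [show Df Tv (Df X1 (fun t x => u t x 2)) t x = -(Df X1 (fun t x => E t x 2) t x) from by
      rw [df_comm hsu2 Tv X1 t x,
        show Df Tv (fun t x => u t x 2) = fun t x => -(E t x 2) from funext fun t => funext fun x => hTu2 t x]
      exact Df_neg X1 t x]
    rw [show Df Tv (Df X2 (fun t x => u t x 1)) t x = -(Df X2 (fun t x => E t x 1) t x) from by
      rw [df_comm hsu1 Tv X2 t x,
        show Df Tv (fun t x => u t x 1) = fun t x => -(E t x 1) from funext fun t => funext fun x => hTu1 t x]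
      exact Df_neg X2 t x]
    rw [show Df Tv (Df X2 (fun t x => u t x 0)) t x = -(Df X2 (fun t x => E t x 0) t x) from by
      rw [df_comm hsu0 Tv X2 t x,
        show Df Tv (fun t x => u t x 0) = fun t x => -(E t x 0) from funext fun t => funext fun x => hTu0 t x]
      exact Df_neg X2 t x]
    rw [show Df Tv (Df X0 (fun t x => u t x 2)) t x = -(Df X0 (fun t x => E t x 2) t x) from by
      rw [df_comm hsu2 Tv X0 t x,
        show Df Tv (fun t x => u t x 2) = fun t x => -(E t x 2) from funext fun t => funext fun x => hTu2 t x]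
      exact Df_neg X0 t x]
    rw [hTu1 t x, hTu0 t x, df_comm hshh Tv X2 t x]
    ring
  have be00 : ∀ (t : ℝ) (x : V3), pd 0 (fun y => E t y 0) x = Df X0 (fun t x => E t x 0) t x :=
    fun t x => pd_eq hse0 0 t x
  have be01 : ∀ (t : ℝ) (x : V3), pd 0 (fun y => E t y 1) x = Df X0 (fun t x => E t x 1) t x :=
    fun t x => pd_eq hse1 0 t x
  have be02 : ∀ (t : ℝ) (x : V3), pd 0 (fun y => E t y 2) x = Df X0 (fun t x => E t x 2) t x :=
    fun t x => pd_eq hse2 0 t x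
  have be10 : ∀ (t : ℝ) (x : V3), pd 1 (fun y => E t y 0) x = Df X1 (fun t x => E t x 0) t x :=
    fun t x => pd_eq hse0 1 t x
  have be11 : ∀ (t : ℝ) (x : V3), pd 1 (fun y => E t y 1) x = Df X1 (fun t x => E t x 1) t x :=
    fun t x => pd_eq hse1 1 t x
  have be12 : ∀ (t : ℝ) (x : V3), pd 1 (fun y => E t y 2) x = Df X1 (fun t x => E t x 2) t x :=
    fun t x => pd_eq hse2 1 t x
  have be20 : ∀ (t : ℝ) (x : V3), pd 2 (fun y => E t y 0) x = Df X2 (fun t x => E t x 0) t x :=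
    fun t x => pd_eq hse0 2 t x
  have be21 : ∀ (t : ℝ) (x : V3), pd 2 (fun y => E t y 1) x = Df X2 (fun t x => E t x 1) t x :=
    fun t x => pd_eq hse1 2 t x
  have be22 : ∀ (t : ℝ) (x : V3), pd 2 (fun y => E t y 2) x = Df X2 (fun t x => E t x 2) t x :=
    fun t x => pd_eq hse2 2 t x
  have hrho : ∀ x : V3, curl3 (u t₀) x ⬝ᵥ (E t₀ x ⨯₃ curl3 (E t₀) x)
      = (Df X1 (fun t x => u t x 2) t₀ x - Df X2 (fun t x => u t x 1) t₀ x) * (E t₀ x 1 * (Df X0 (fun t x => E t x 1) t₀ x - Df X1 (fun t x => E t x 0) t₀ x) - E t₀ x 2 * (Df X2 (fun t x => E t x 0) t₀ x - Df X0 (fun t x => E t x 2) t₀ x))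
      + (Df X2 (fun t x => u t x 0) t₀ x - Df X0 (fun t x => u t x 2) t₀ x) * (E t₀ x 2 * (Df X1 (fun t x => E t x 2) t₀ x - Df X2 (fun t x => E t x 1) t₀ x) - E t₀ x 0 * (Df X0 (fun t x => E t x 1) t₀ x - Df X1 (fun t x => E t x 0) t₀ x))
      + (Df X0 (fun t x => u t x 1) t₀ x - Df X1 (fun t x => u t x 0) t₀ x) * (E t₀ x 0 * (Df X2 (fun t x => E t x 0) t₀ x - Df X0 (fun t x => E t x 2) t₀ x) - E t₀ x 1 * (Df X1 (fun t x => E t x 2) t₀ x - Df X2 (fun t x => E t x 1) t₀ x)) := by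
    intro x
    simp only [dotProduct, Fin.sum_univ_three, cross_apply, curl3, Matrix.cons_val_zero,
      Matrix.cons_val_one, Matrix.head_cons, Matrix.cons_val_two, Matrix.tail_cons]
    simp only [bu00, bu01, bu02, bu10, bu11, bu12, bu20, bu21, bu22,
      be00, be01, be02, be10, be11, be12, be20, be21, be22]
    try ring
  have hmain : ∀ x : V3, Df Tv (fun t x => E t x 0 * (Df X1 (fun t x => E t x 2) t x - Df X2 (fun t x => E t x 1) t x) + E t x 1 * (Df X2 (fun t x => E t x 0) t x - Df X0 (fun t x => E t x 2) t x) + E t x 2 * (Df X0 (fun t x => E t x 1) t x - Df X1 (fun t x => E t x 0) t x)) t₀ x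
      = -2 * (curl3 (u t₀) x ⬝ᵥ (E t₀ x ⨯₃ curl3 (E t₀) x))
        + (Df X0 (fun t x => 2 * (Df Tv hh t x * (Df X1 (fun t x => E t x 2) t x - Df X2 (fun t x => E t x 1) t x)) + (Df Tv (fun t x => E t x 1) t x * E t x 2 - Df Tv (fun t x => E t x 2) t x * E t x 1)) t₀ x + Df X1 (fun t x => 2 * (Df Tv hh t x * (Df X2 (fun t x => E t x 0) t x - Df X0 (fun t x => E t x 2) t x)) + (Df Tv (fun t x => E t x 2) t x * E t x 0 - Df Tv (fun t x => E t x 0) t x * E t x 2)) t₀ x + Df X2 (fun t x => 2 * (Df Tv hh t x * (Df X0 (fun t x => E t x 1) t x - Df X1 (fun t x => E t x 0) t x)) + (Df Tv (fun t x => E t x 0) t x * E t x 1 - Df Tv (fun t x => E t x 1) t x * E t x 0)) t₀ x) := by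
    intro x
    rw [hrho x]
    rw [Df_add (sS_add (sS_mul hse0 (sS_sub (sS_df hse2 X1) (sS_df hse1 X2))) (sS_mul hse1 (sS_sub (sS_df hse0 X2) (sS_df hse2 X0)))) (sS_mul hse2 (sS_sub (sS_df hse1 X0) (sS_df hse0 X1))),
      Df_add (sS_mul hse0 (sS_sub (sS_df hse2 X1) (sS_df hse1 X2))) (sS_mul hse1 (sS_sub (sS_df hse0 X2) (sS_df hse2 X0))),
      Df_mul hse0 (sS_sub (sS_df hse2 X1) (sS_df hse1 X2)), Df_mul hse1 (sS_sub (sS_df hse0 X2) (sS_df hse2 X0)), Df_mul hse2 (sS_sub (sS_df hse1 X0) (sS_df hse0 X1))]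
    rw [show Df Tv (fun t x => Df X1 (fun t x => E t x 2) t x - Df X2 (fun t x => E t x 1) t x) t₀ x = Df X1 (Df Tv (fun t x => E t x 2)) t₀ x - Df X2 (Df Tv (fun t x => E t x 1)) t₀ x from by
      rw [Df_sub (sS_df hse2 X1) (sS_df hse1 X2), df_comm hse2 Tv X1 t₀ x,
        df_comm hse1 Tv X2 t₀ x]]
    rw [show Df Tv (fun t x => Df X2 (fun t x => E t x 0) t x - Df X0 (fun t x => E t x 2) t x) t₀ x = Df X2 (Df Tv (fun t x => E t x 0)) t₀ x - Df X0 (Df Tv (fun t x => E t x 2)) t₀ x from by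
      rw [Df_sub (sS_df hse0 X2) (sS_df hse2 X0), df_comm hse0 Tv X2 t₀ x,
        df_comm hse2 Tv X0 t₀ x]]
    rw [show Df Tv (fun t x => Df X0 (fun t x => E t x 1) t x - Df X1 (fun t x => E t x 0) t x) t₀ x = Df X0 (Df Tv (fun t x => E t x 1)) t₀ x - Df X1 (Df Tv (fun t x => E t x 0)) t₀ x from by
      rw [Df_sub (sS_df hse1 X0) (sS_df hse0 X1), df_comm hse1 Tv X0 t₀ x,
        df_comm hse0 Tv X1 t₀ x]]
    rw [show Df X0 (fun t x => 2 * (Df Tv hh t x * (Df X1 (fun t x => E t x 2) t x - Df X2 (fun t x => E t x 1) t x)) + (Df Tv (fun t x => E t x 1) t x * E t x 2 - Df Tv (fun t x => E t x 2) t x * E t x 1)) t₀ x = 2 * Df X0 (fun t x => Df Tv hh t x * (Df X1 (fun t x => E t x 2) t x - Df X2 (fun t x => E t x 1) t x)) t₀ x + Df X0 (fun t x => Df Tv (fun t x => E t x 1) t x * E t x 2 - Df Tv (fun t x => E t x 2) t x * E t x 1) t₀ x from by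
      rw [Df_add (sS_const_mul (sS_mul (sS_df hshh Tv) (sS_sub (sS_df hse2 X1) (sS_df hse1 X2))) 2) (sS_sub (sS_mul (sS_df hse1 Tv) hse2) (sS_mul (sS_df hse2 Tv) hse1)), Df_const_mul (sS_mul (sS_df hshh Tv) (sS_sub (sS_df hse2 X1) (sS_df hse1 X2))) 2]]
    rw [show Df X1 (fun t x => 2 * (Df Tv hh t x * (Df X2 (fun t x => E t x 0) t x - Df X0 (fun t x => E t x 2) t x)) + (Df Tv (fun t x => E t x 2) t x * E t x 0 - Df Tv (fun t x => E t x 0) t x * E t x 2)) t₀ x = 2 * Df X1 (fun t x => Df Tv hh t x * (Df X2 (fun t x => E t x 0) t x - Df X0 (fun t x => E t x 2) t x)) t₀ x + Df X1 (fun t x => Df Tv (fun t x => E t x 2) t x * E t x 0 - Df Tv (fun t x => E t x 0) t x * E t x 2) t₀ x from by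
      rw [Df_add (sS_const_mul (sS_mul (sS_df hshh Tv) (sS_sub (sS_df hse0 X2) (sS_df hse2 X0))) 2) (sS_sub (sS_mul (sS_df hse2 Tv) hse0) (sS_mul (sS_df hse0 Tv) hse2)), Df_const_mul (sS_mul (sS_df hshh Tv) (sS_sub (sS_df hse0 X2) (sS_df hse2 X0))) 2]]
    rw [show Df X2 (fun t x => 2 * (Df Tv hh t x * (Df X0 (fun t x => E t x 1) t x - Df X1 (fun t x => E t x 0) t x)) + (Df Tv (fun t x => E t x 0) t x * E t x 1 - Df Tv (fun t x => E t x 1) t x * E t x 0)) t₀ x = 2 * Df X2 (fun t x => Df Tv hh t x * (Df X0 (fun t x => E t x 1) t x - Df X1 (fun t x => E t x 0) t x)) t₀ x + Df X2 (fun t x => Df Tv (fun t x => E t x 0) t x * E t x 1 - Df Tv (fun t x => E t x 1) t x * E t x 0) t₀ x from by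
      rw [Df_add (sS_const_mul (sS_mul (sS_df hshh Tv) (sS_sub (sS_df hse1 X0) (sS_df hse0 X1))) 2) (sS_sub (sS_mul (sS_df hse0 Tv) hse1) (sS_mul (sS_df hse1 Tv) hse0)), Df_const_mul (sS_mul (sS_df hshh Tv) (sS_sub (sS_df hse1 X0) (sS_df hse0 X1))) 2]]
    have hdc := div_cross (Df Tv (fun t x => E t x 0)) (Df Tv (fun t x => E t x 1)) (Df Tv (fun t x => E t x 2)) (fun t x => E t x 0) (fun t x => E t x 1) (fun t x => E t x 2)
      (sS_df hse0 Tv) (sS_df hse1 Tv) (sS_df hse2 Tv) hse0 hse1 hse2 t₀ x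
    have hgd := grad_dot_curl (Df Tv hh) (fun t x => E t x 0) (fun t x => E t x 1) (fun t x => E t x 2) (sS_df hshh Tv) hse0 hse1 hse2 t₀ x
    rw [hdE0 t₀ x, hdE1 t₀ x, hdE2 t₀ x] at hdc ⊢
    linear_combination (-1 : ℝ) * hdc + 2 * hgd
  have hsG : SmoothS (fun t x => E t x 0 * (Df X1 (fun t x => E t x 2) t x - Df X2 (fun t x => E t x 1) t x) + E t x 1 * (Df X2 (fun t x => E t x 0) t x - Df X0 (fun t x => E t x 2) t x) + E t x 2 * (Df X0 (fun t x => E t x 1) t x - Df X1 (fun t x => E t x 0) t x)) := (sS_add (sS_add (sS_mul hse0 (sS_sub (sS_df hse2 X1) (sS_df hse1 X2))) (sS_mul hse1 (sS_sub (sS_df hse0 X2) (sS_df hse2 X0)))) (sS_mul hse2 (sS_sub (sS_df hse1 X0) (sS_df hse0 X1))))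
  have hGfun : ∀ t : ℝ, (fun x => E t x ⬝ᵥ curl3 (E t) x) = fun x => E t x 0 * (Df X1 (fun t x => E t x 2) t x - Df X2 (fun t x => E t x 1) t x) + E t x 1 * (Df X2 (fun t x => E t x 0) t x - Df X0 (fun t x => E t x 2) t x) + E t x 2 * (Df X0 (fun t x => E t x 1) t x - Df X1 (fun t x => E t x 0) t x) := by
    intro t
    funext x
    simp only [dotProduct, Fin.sum_univ_three, curl3, Matrix.cons_val_zero, Matrix.cons_val_one,
      Matrix.head_cons, Matrix.cons_val_two, Matrix.tail_cons]
    simp only [be00, be01, be02, be10, be11, be12, be20, be21, be22]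
    try ring
  have hLfun : Λ = fun t => ∫ x in Set.Icc (0 : V3) (fun _ => L), E t x 0 * (Df X1 (fun t x => E t x 2) t x - Df X2 (fun t x => E t x 1) t x) + E t x 1 * (Df X2 (fun t x => E t x 0) t x - Df X0 (fun t x => E t x 2) t x) + E t x 2 * (Df X0 (fun t x => E t x 1) t x - Df X1 (fun t x => E t x 0) t x) := by
    funext t
    rw [hΛ t, hGfun t]
  have hd : HasDerivAt Λ (∫ x in Set.Icc (0 : V3) (fun _ => L), Df Tv (fun t x => E t x 0 * (Df X1 (fun t x => E t x 2) t x - Df X2 (fun t x => E t x 1) t x) + E t x 1 * (Df X2 (fun t x => E t x 0) t x - Df X0 (fun t x => E t x 2) t x) + E t x 2 * (Df X0 (fun t x => E t x 1) t x - Df X1 (fun t x => E t x 0) t x)) t₀ x) t₀ := by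
    rw [hLfun]
    exact hasDerivAt_int hsG L t₀
  have hsRho : SmoothS (fun t x => (Df X1 (fun t x => u t x 2) t x - Df X2 (fun t x => u t x 1) t x) * (E t x 1 * (Df X0 (fun t x => E t x 1) t x - Df X1 (fun t x => E t x 0) t x) - E t x 2 * (Df X2 (fun t x => E t x 0) t x - Df X0 (fun t x => E t x 2) t x)) + (Df X2 (fun t x => u t x 0) t x - Df X0 (fun t x => u t x 2) t x) * (E t x 2 * (Df X1 (fun t x => E t x 2) t x - Df X2 (fun t x => E t x 1) t x) - E t x 0 * (Df X0 (fun t x => E t x 1) t x - Df X1 (fun t x => E t x 0) t x)) + (Df X0 (fun t x => u t x 1) t x - Df X1 (fun t x => u t x 0) t x) * (E t x 0 * (Df X2 (fun t x => E t x 0) t x - Df X0 (fun t x => E t x 2) t x) - E t x 1 * (Df X1 (fun t x => E t x 2) t x - Df X2 (fun t x => E t x 1) t x))) :=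
    sS_add (sS_add (sS_mul (sS_sub (sS_df hsu2 X1) (sS_df hsu1 X2)) (sS_sub (sS_mul hse1 (sS_sub (sS_df hse1 X0) (sS_df hse0 X1))) (sS_mul hse2 (sS_sub (sS_df hse0 X2) (sS_df hse2 X0))))) (sS_mul (sS_sub (sS_df hsu0 X2) (sS_df hsu2 X0)) (sS_sub (sS_mul hse2 (sS_sub (sS_df hse2 X1) (sS_df hse1 X2))) (sS_mul hse0 (sS_sub (sS_df hse1 X0) (sS_df hse0 X1)))))) (sS_mul (sS_sub (sS_df hsu1 X0) (sS_df hsu0 X1)) (sS_sub (sS_mul hse0 (sS_sub (sS_df hse0 X2) (sS_df hse2 X0))) (sS_mul hse1 (sS_sub (sS_df hse2 X1) (sS_df hse1 X2)))))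
  have hIrho : IntegrableOn (fun x => -2 * (curl3 (u t₀) x ⬝ᵥ (E t₀ x ⨯₃ curl3 (E t₀) x))) (Set.Icc (0 : V3) (fun _ => L)) := by
    have hc : Continuous fun x => curl3 (u t₀) x ⬝ᵥ (E t₀ x ⨯₃ curl3 (E t₀) x) := by
      rw [show (fun x => curl3 (u t₀) x ⬝ᵥ (E t₀ x ⨯₃ curl3 (E t₀) x)) = fun x =>
        (Df X1 (fun t x => u t x 2) t₀ x - Df X2 (fun t x => u t x 1) t₀ x) * (E t₀ x 1 * (Df X0 (fun t x => E t x 1) t₀ x - Df X1 (fun t x => E t x 0) t₀ x) - E t₀ x 2 * (Df X2 (fun t x => E t x 0) t₀ x - Df X0 (fun t x => E t x 2) t₀ x))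
      + (Df X2 (fun t x => u t x 0) t₀ x - Df X0 (fun t x => u t x 2) t₀ x) * (E t₀ x 2 * (Df X1 (fun t x => E t x 2) t₀ x - Df X2 (fun t x => E t x 1) t₀ x) - E t₀ x 0 * (Df X0 (fun t x => E t x 1) t₀ x - Df X1 (fun t x => E t x 0) t₀ x))
      + (Df X0 (fun t x => u t x 1) t₀ x - Df X1 (fun t x => u t x 0) t₀ x) * (E t₀ x 0 * (Df X2 (fun t x => E t x 0) t₀ x - Df X0 (fun t x => E t x 2) t₀ x) - E t₀ x 1 * (Df X1 (fun t x => E t x 2) t₀ x - Df X2 (fun t x => E t x 1) t₀ x)) from funext hrho]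
      exact sS_cont hsRho t₀
    exact (continuous_const.mul hc).continuousOn.integrableOn_compact isCompact_Icc
  have hsW0 : SmoothS (fun t x => 2 * (Df Tv hh t x * (Df X1 (fun t x => E t x 2) t x - Df X2 (fun t x => E t x 1) t x)) + (Df Tv (fun t x => E t x 1) t x * E t x 2 - Df Tv (fun t x => E t x 2) t x * E t x 1)) := sS_add (sS_const_mul (sS_mul (sS_df hshh Tv) (sS_sub (sS_df hse2 X1) (sS_df hse1 X2))) 2) (sS_sub (sS_mul (sS_df hse1 Tv) hse2) (sS_mul (sS_df hse2 Tv) hse1))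
  have hqW0 : Per L (fun t x => 2 * (Df Tv hh t x * (Df X1 (fun t x => E t x 2) t x - Df X2 (fun t x => E t x 1) t x)) + (Df Tv (fun t x => E t x 1) t x * E t x 2 - Df Tv (fun t x => E t x 2) t x * E t x 1)) :=
    Per.add (Per.const_mul (Per.mul (Per.df hshh hqhh Tv)
        (Per.sub (Per.df hse2 hqe2 X1) (Per.df hse1 hqe1 X2))) 2)
      (Per.sub (Per.mul (Per.df hse1 hqe1 Tv) hqe2) (Per.mul (Per.df hse2 hqe2 Tv) hqe1))
  have hsW1 : SmoothS (fun t x => 2 * (Df Tv hh t x * (Df X2 (fun t x => E t x 0) t x - Df X0 (fun t x => E t x 2) t x)) + (Df Tv (fun t x => E t x 2) t x * E t x 0 - Df Tv (fun t x => E t x 0) t x * E t x 2)) := sS_add (sS_const_mul (sS_mul (sS_df hshh Tv) (sS_sub (sS_df hse0 X2) (sS_df hse2 X0))) 2) (sS_sub (sS_mul (sS_df hse2 Tv) hse0) (sS_mul (sS_df hse0 Tv) hse2))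
  have hqW1 : Per L (fun t x => 2 * (Df Tv hh t x * (Df X2 (fun t x => E t x 0) t x - Df X0 (fun t x => E t x 2) t x)) + (Df Tv (fun t x => E t x 2) t x * E t x 0 - Df Tv (fun t x => E t x 0) t x * E t x 2)) :=
    Per.add (Per.const_mul (Per.mul (Per.df hshh hqhh Tv)
        (Per.sub (Per.df hse0 hqe0 X2) (Per.df hse2 hqe2 X0))) 2)
      (Per.sub (Per.mul (Per.df hse2 hqe2 Tv) hqe0) (Per.mul (Per.df hse0 hqe0 Tv) hqe2))
  have hsW2 : SmoothS (fun t x => 2 * (Df Tv hh t x * (Df X0 (fun t x => E t x 1) t x - Df X1 (fun t x => E t x 0) t x)) + (Df Tv (fun t x => E t x 0) t x * E t x 1 - Df Tv (fun t x => E t x 1) t x * E t x 0)) := sS_add (sS_const_mul (sS_mul (sS_df hshh Tv) (sS_sub (sS_df hse1 X0) (sS_df hse0 X1))) 2) (sS_sub (sS_mul (sS_df hse0 Tv) hse1) (sS_mul (sS_df hse1 Tv) hse0))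
  have hqW2 : Per L (fun t x => 2 * (Df Tv hh t x * (Df X0 (fun t x => E t x 1) t x - Df X1 (fun t x => E t x 0) t x)) + (Df Tv (fun t x => E t x 0) t x * E t x 1 - Df Tv (fun t x => E t x 1) t x * E t x 0)) :=
    Per.add (Per.const_mul (Per.mul (Per.df hshh hqhh Tv)
        (Per.sub (Per.df hse1 hqe1 X0) (Per.df hse0 hqe0 X1))) 2)
      (Per.sub (Per.mul (Per.df hse0 hqe0 Tv) hqe1) (Per.mul (Per.df hse1 hqe1 Tv) hqe0))
  have hIDD : IntegrableOn (fun x => Df X0 (fun t x => 2 * (Df Tv hh t x * (Df X1 (fun t x => E t x 2) t x - Df X2 (fun t x => E t x 1) t x)) + (Df Tv (fun t x => E t x 1) t x * E t x 2 - Df Tv (fun t x => E t x 2) t x * E t x 1)) t₀ x + Df X1 (fun t x => 2 * (Df Tv hh t x * (Df X2 (fun t x => E t x 0) t x - Df X0 (fun t x => E t x 2) t x)) + (Df Tv (fun t x => E t x 2) t x * E t x 0 - Df Tv (fun t x => E t x 0) t x * E t x 2)) t₀ x + Df X2 (fun t x => 2 * (Df Tv hh t x * (Df X0 (fun t x =>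 E t x 1) t x - Df X1 (fun t x => E t x 0) t x)) + (Df Tv (fun t x => E t x 0) t x * E t x 1 - Df Tv (fun t x => E t x 1) t x * E t x 0)) t₀ x) (Set.Icc (0 : V3) (fun _ => L)) := by
    have hc : Continuous fun x => Df X0 (fun t x => 2 * (Df Tv hh t x * (Df X1 (fun t x => E t x 2) t x - Df X2 (fun t x => E t x 1) t x)) + (Df Tv (fun t x => E t x 1) t x * E t x 2 - Df Tv (fun t x => E t x 2) t x * E t x 1)) t₀ x + Df X1 (fun t x => 2 * (Df Tv hh t x * (Df X2 (fun t x => E t x 0) t x - Df X0 (fun t x => E t x 2) t x)) + (Df Tv (fun t x => E t x 2) t x * E t x 0 - Df Tv (fun t x => E t x 0) t x * E t x 2)) t₀ x + Df X2 (fun t x => 2 * (Df Tv hh t x * (Df X0 (fun t x => E t x 1) t x - Df X1 (fun t x => E t x 0) t x)) + (Df Tv (fun t x => E t x 0) t x * E t x 1 - Df Tv (fun t x => E t x 1) t x * E t x 0)) t₀ x :=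
      ((sS_cont (sS_df hsW0 X0) t₀).add (sS_cont (sS_df hsW1 X1) t₀)).add
        (sS_cont (sS_df hsW2 X2) t₀)
    exact hc.continuousOn.integrableOn_compact isCompact_Icc
  have hWcd : ContDiff ℝ (⊤ : ℕ∞) (fun y : V3 => (![2 * (Df Tv hh t₀ y * (Df X1 (fun t x => E t x 2) t₀ y - Df X2 (fun t x => E t x 1) t₀ y)) + (Df Tv (fun t x => E t x 1) t₀ y * E t₀ y 2 - Df Tv (fun t x => E t x 2) t₀ y * E t₀ y 1), 2 * (Df Tv hh t₀ y * (Df X2 (fun t x => E t x 0) t₀ y - Df X0 (fun t x => E t x 2) t₀ y)) + (Df Tv (fun t x => E t x 2) t₀ y * E t₀ y 0 - Df Tv (fun t x => E t x 0) t₀ y * E t₀ y 2), 2 * (Df Tv hh t₀ y * (Df X0 (fun t x => E t x 1) t₀ y - Df X1 (fun t x => E t x 0) t₀ y)) + (Df Tv (fun t x => E t x 0) t₀ y * E t₀ y 1 - Df Tv (fun t x => E t x 1) t₀ y * E t₀ y 0)] : V3)) := by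
    rw [contDiff_pi]
    intro i
    fin_cases i
    · exact sS_cd hsW0 t₀
    · exact sS_cd hsW1 t₀
    · exact sS_cd hsW2 t₀
  have hWper : ∀ (y : V3) (i : Fin 3), (fun y : V3 => (![2 * (Df Tv hh t₀ y * (Df X1 (fun t x => E t x 2) t₀ y - Df X2 (fun t x => E t x 1) t₀ y)) + (Df Tv (fun t x => E t x 1) t₀ y * E t₀ y 2 - Df Tv (fun t x => E t x 2) t₀ y * E t₀ y 1), 2 * (Df Tv hh t₀ y * (Df X2 (fun t x => E t x 0) t₀ y - Df X0 (fun t x => E t x 2) t₀ y)) + (Df Tv (fun t x => E t x 2) t₀ y * E t₀ y 0 - Df Tv (fun t x => E t x 0) t₀ y * E t₀ y 2), 2 * (Df Tv hh t₀ y * (Df X0 (fun t x => E t x 1) t₀ y - Df X1 (fun t x => E t x 0) t₀ y)) + (Df Tv (fun t x => E t x 0) t₀ y * E t₀ y 1 - Df Tv (fun t x => E t x 1) t₀ y * E t₀ y 0)] : V3)) (y + L • (Pi.single i 1 : V3)) = (fun y : V3 => (![2 * (Df Tv hh t₀ y * (Df X1 (fun t x => E t x 2) t₀ y - Df X2 (fun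 t x => E t x 1) t₀ y)) + (Df Tv (fun t x => E t x 1) t₀ y * E t₀ y 2 - Df Tv (fun t x => E t x 2) t₀ y * E t₀ y 1), 2 * (Df Tv hh t₀ y * (Df X2 (fun t x => E t x 0) t₀ y - Df X0 (fun t x => E t x 2) t₀ y)) + (Df Tv (fun t x => E t x 2) t₀ y * E t₀ y 0 - Df Tv (fun t x => E t x 0) t₀ y * E t₀ y 2), 2 * (Df Tv hh t₀ y * (Df X0 (fun t x => E t x 1) t₀ y - Df X1 (fun t x => E t x 0) t₀ y)) + (Df Tv (fun t x => E t x 0) t₀ y * E t₀ y 1 - Df Tv (fun t x => E t x 1) t₀ y * E t₀ y 0)] : V3)) y := by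
    intro y i
    funext j
    fin_cases j
    · exact hqW0 t₀ y i
    · exact hqW1 t₀ y i
    · exact hqW2 t₀ y i
  have hdiv0 : (∫ x in Set.Icc (0 : V3) (fun _ => L), (Df X0 (fun t x => 2 * (Df Tv hh t x * (Df X1 (fun t x => E t x 2) t x - Df X2 (fun t x => E t x 1) t x)) + (Df Tv (fun t x => E t x 1) t x * E t x 2 - Df Tv (fun t x => E t x 2) t x * E t x 1)) t₀ x + Df X1 (fun t x => 2 * (Df Tv hh t x * (Df X2 (fun t x => E t x 0) t x - Df X0 (fun t x => E t x 2) t x)) + (Df Tv (fun t x => E t x 2) t x * E t x 0 - Df Tv (fun t x => E t x 0) t x * E t x 2)) t₀ x + Df X2 (fun t x => 2 * (Df Tv hh t x * (Df X0 (fun t x => E t x 1) t x - Df X1 (fun t x => E t x 0) t x)) + (Df Tv (fun t x => E t x 0) t x * E t x 1 - Df Tv (fun t x => E t x 1) t x * E t x 0)) t₀ x)) = 0 := by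
    have h0 := integral_div_zero L hL (fun y : V3 => (![2 * (Df Tv hh t₀ y * (Df X1 (fun t x => E t x 2) t₀ y - Df X2 (fun t x => E t x 1) t₀ y)) + (Df Tv (fun t x => E t x 1) t₀ y * E t₀ y 2 - Df Tv (fun t x => E t x 2) t₀ y * E t₀ y 1), 2 * (Df Tv hh t₀ y * (Df X2 (fun t x => E t x 0) t₀ y - Df X0 (fun t x => E t x 2) t₀ y)) + (Df Tv (fun t x => E t x 2) t₀ y * E t₀ y 0 - Df Tv (fun t x => E t x 0) t₀ y * E t₀ y 2), 2 * (Df Tv hh t₀ y * (Df X0 (fun t x => E t x 1) t₀ y - Df X1 (fun t x => E t x 0) t₀ y)) + (Df Tv (fun t x => E t x 0) t₀ y * E t₀ y 1 - Df Tv (fun t x => E t x 1) t₀ y * E t₀ y 0)] : V3)) hWcd hWper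
    rw [show (fun x => ∑ i : Fin 3, pd i (fun y => (fun y : V3 => (![2 * (Df Tv hh t₀ y * (Df X1 (fun t x => E t x 2) t₀ y - Df X2 (fun t x => E t x 1) t₀ y)) + (Df Tv (fun t x => E t x 1) t₀ y * E t₀ y 2 - Df Tv (fun t x => E t x 2) t₀ y * E t₀ y 1), 2 * (Df Tv hh t₀ y * (Df X2 (fun t x => E t x 0) t₀ y - Df X0 (fun t x => E t x 2) t₀ y)) + (Df Tv (fun t x => E t x 2) t₀ y * E t₀ y 0 - Df Tv (fun t x => E t x 0) t₀ y * E t₀ y 2), 2 * (Df Tv hh t₀ y * (Df X0 (fun t x => E t x 1) t₀ y - Df X1 (fun t x => E t x 0) t₀ y)) + (Df Tv (fun t x => E t x 0) t₀ y * E t₀ y 1 - Df Tv (fun t x => E t x 1) t₀ y * E t₀ y 0)] : V3)) y i) x) = fun x => Df X0 (fun t x => 2 * (Df Tv hh t x * (Df X1 (fun t x => E t x 2) t x - Df X2 (fun t x => E t x 1) t x)) + (Df Tv (fun t x => E t x 1) t x * E t x 2 - Df Tv (fun t x => E t x 2) t x * E t x 1)) t₀ x + Df X1 (fun t x => 2 *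 (Df Tv hh t x * (Df X2 (fun t x => E t x 0) t x - Df X0 (fun t x => E t x 2) t x)) + (Df Tv (fun t x => E t x 2) t x * E t x 0 - Df Tv (fun t x => E t x 0) t x * E t x 2)) t₀ x + Df X2 (fun t x => 2 * (Df Tv hh t x * (Df X0 (fun t x => E t x 1) t x - Df X1 (fun t x => E t x 0) t x)) + (Df Tv (fun t x => E t x 0) t x * E t x 1 - Df Tv (fun t x => E t x 1) t x * E t x 0)) t₀ x from
      funext fun x => by
        rw [Fin.sum_univ_three]
        rw [show pd 0 (fun y => (fun y : V3 => (![2 * (Df Tv hh t₀ y * (Df X1 (fun t x => E t x 2) t₀ y - Df X2 (fun t x => E t x 1) t₀ y)) + (Df Tv (fun t x => E t x 1) t₀ y * E t₀ y 2 - Df Tv (fun t x => E t x 2) t₀ y * E t₀ y 1), 2 * (Df Tv hh t₀ y * (Df X2 (fun t x => E t x 0) t₀ y - Df X0 (fun t x => E t x 2) t₀ y)) + (Df Tv (fun t x => E t x 2) t₀ y * E t₀ y 0 - Df Tv (fun t x => E t x 0) t₀ y * E t₀ y 2), 2 * (Df Tv hh t₀ y * (Df X0 (fun t x => E t x 1)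 t₀ y - Df X1 (fun t x => E t x 0) t₀ y)) + (Df Tv (fun t x => E t x 0) t₀ y * E t₀ y 1 - Df Tv (fun t x => E t x 1) t₀ y * E t₀ y 0)] : V3)) y 0) x = Df X0 (fun t x => 2 * (Df Tv hh t x * (Df X1 (fun t x => E t x 2) t x - Df X2 (fun t x => E t x 1) t x)) + (Df Tv (fun t x => E t x 1) t x * E t x 2 - Df Tv (fun t x => E t x 2) t x * E t x 1)) t₀ x from pd_eq hsW0 0 t₀ x,
          show pd 1 (fun y => (fun y : V3 => (![2 * (Df Tv hh t₀ y * (Df X1 (fun t x => E t x 2) t₀ y - Df X2 (fun t x => E t x 1) t₀ y)) + (Df Tv (fun t x => E t x 1) t₀ y * E t₀ y 2 - Df Tv (fun t x => E t x 2) t₀ y * E t₀ y 1), 2 * (Df Tv hh t₀ y * (Df X2 (fun t x => E t x 0) t₀ y - Df X0 (fun t x => E t x 2) t₀ y)) + (Df Tv (fun t x => E t x 2) t₀ y * E t₀ y 0 - Df Tv (fun t x => E t x 0) t₀ y * E t₀ y 2), 2 * (Df Tv hh t₀ y * (Df X0 (fun t x => E t x 1) t₀ y - Df X1 (fun t x =>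 E t x 0) t₀ y)) + (Df Tv (fun t x => E t x 0) t₀ y * E t₀ y 1 - Df Tv (fun t x => E t x 1) t₀ y * E t₀ y 0)] : V3)) y 1) x = Df X1 (fun t x => 2 * (Df Tv hh t x * (Df X2 (fun t x => E t x 0) t x - Df X0 (fun t x => E t x 2) t x)) + (Df Tv (fun t x => E t x 2) t x * E t x 0 - Df Tv (fun t x => E t x 0) t x * E t x 2)) t₀ x from pd_eq hsW1 1 t₀ x,
          show pd 2 (fun y => (fun y : V3 => (![2 * (Df Tv hh t₀ y * (Df X1 (fun t x => E t x 2) t₀ y - Df X2 (fun t x => E t x 1) t₀ y)) + (Df Tv (fun t x => E t x 1) t₀ y * E t₀ y 2 - Df Tv (fun t x => E t x 2) t₀ y * E t₀ y 1), 2 * (Df Tv hh t₀ y * (Df X2 (fun t x => E t x 0) t₀ y - Df X0 (fun t x => E t x 2) t₀ y)) + (Df Tv (fun t x => E t x 2) t₀ y * E t₀ y 0 - Df Tv (fun t x => E t x 0) t₀ y * E t₀ y 2), 2 * (Df Tv hh t₀ y * (Df X0 (fun t x => E t x 1) t₀ y - Df X1 (fun t x => E t x 0) t₀ y)) + (Df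 Tv (fun t x => E t x 0) t₀ y * E t₀ y 1 - Df Tv (fun t x => E t x 1) t₀ y * E t₀ y 0)] : V3)) y 2) x = Df X2 (fun t x => 2 * (Df Tv hh t x * (Df X0 (fun t x => E t x 1) t x - Df X1 (fun t x => E t x 0) t x)) + (Df Tv (fun t x => E t x 0) t x * E t x 1 - Df Tv (fun t x => E t x 1) t x * E t x 0)) t₀ x from pd_eq hsW2 2 t₀ x]] at h0
    exact h0
  have hval : (∫ x in Set.Icc (0 : V3) (fun _ => L), Df Tv (fun t x => E t x 0 * (Df X1 (fun t x => E t x 2) t x - Df X2 (fun t x => E t x 1) t x) + E t x 1 * (Df X2 (fun t x => E t x 0) t x - Df X0 (fun t x => E t x 2) t x) + E t x 2 * (Df X0 (fun t x => E t x 1) t x - Df X1 (fun t x => E t x 0) t x)) t₀ x)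
      = -2 * ∫ x in Set.Icc (0 : V3) (fun _ => L), curl3 (u t₀) x ⬝ᵥ (E t₀ x ⨯₃ curl3 (E t₀) x) := by
    rw [show (fun x => Df Tv (fun t x => E t x 0 * (Df X1 (fun t x => E t x 2) t x - Df X2 (fun t x => E t x 1) t x) + E t x 1 * (Df X2 (fun t x => E t x 0) t x - Df X0 (fun t x => E t x 2) t x) + E t x 2 * (Df X0 (fun t x => E t x 1) t x - Df X1 (fun t x => E t x 0) t x)) t₀ x) = fun x =>
        -2 * (curl3 (u t₀) x ⬝ᵥ (E t₀ x ⨯₃ curl3 (E t₀) x))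
        + (Df X0 (fun t x => 2 * (Df Tv hh t x * (Df X1 (fun t x => E t x 2) t x - Df X2 (fun t x => E t x 1) t x)) + (Df Tv (fun t x => E t x 1) t x * E t x 2 - Df Tv (fun t x => E t x 2) t x * E t x 1)) t₀ x + Df X1 (fun t x => 2 * (Df Tv hh t x * (Df X2 (fun t x => E t x 0) t x - Df X0 (fun t x => E t x 2) t x)) + (Df Tv (fun t x => E t x 2) t x * E t x 0 - Df Tv (fun t x => E t x 0) t x * E t x 2)) t₀ x + Df X2 (fun t x => 2 * (Df Tv hh t x * (Df X0 (fun t x => E t x 1) t x - Df X1 (fun t x => E t x 0) t x)) + (Df Tv (fun t x => E t x 0) t x * E t x 1 - Df Tv (fun t x => E t x 1) t x * E t x 0)) t₀ x) from funext hmain]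
    rw [integral_add hIrho hIDD, hdiv0, add_zero, integral_const_mul]
  rw [hval] at hd
  exact hd
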